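/- arXiv:2602.07730 — 2 statements merged into one kernel-verified Lean document; each statement's English description precedes it below -/
import Mathlib

section
/- Let S be a finite nonempty state space, A a finite nonempty action space, p transition probabilities on S×A with p(s'|s,a) ≥ 0 and Σ_{s'} p(s'|s,a) = 1 for all s,a, and γ ∈ [0,1). Let P : S×S → ℝ be a symmetric row-stochastic matrix and L = I − P its graph Laplacian, with orthonormal eigenbasis e_1,…,e_{|S|} of L ordered by nondecreasing eigenvalues 0 = λ_1 ≤ λ_2 ≤ … ≤ λ_{|S|}. Let r : S → ℝ be a reward function, and for 1 ≤ k ≤ |S| with λ_k > 0 let r_k = Σ_{i=1}^{k} ⟨r, e_i⟩ e_i be its truncated spectral reconstruction. Suppose v* : S → ℝ satisfies the Bellman optimality equation for reward r and v*_k : S → ℝ satisfies the Bellman optimality equation for reward r_k. Then ‖v* − v*_k‖_∞ ≤ ‖r‖_G / ((1−γ)·√λ_k). -/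
/-!
The Bellman optimality operator is `γ`-Lipschitz in the value and `1`-Lipschitz in the reward
for the sup norm, so its fixed points satisfy `(1 - γ) ‖v - v_k‖_∞ ≤ ‖r - r_k‖_∞`.
Since the eigenbasis is complete, `r - r_k = ∑_{i > k} ⟨r, e_i⟩ e_i`, while
`‖r‖_G² = ⟨r, L r⟩ = ∑_i λ_i ⟨r, e_i⟩²` with every `λ_i ≥ 0` and `λ_i ≥ λ_k` for `i > k`.
Hence `λ_k ‖r - r_k‖₂² ≤ ‖r‖_G²`, and the sup norm is at most the Euclidean norm.
-/

open Finset Matrix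

theorem norm_le_sqrt_dotProduct_self {S : Type*} [Fintype S] (f : S → ℝ) : ‖f‖ ≤ √(f ⬝ᵥ f) :=
  (pi_norm_le_iff_of_nonneg (Real.sqrt_nonneg _)).2 fun s => Real.abs_le_sqrt <| by
    simpa [dotProduct, sq] using
      single_le_sum (f := fun t => f t * f t) (fun t _ => mul_self_nonneg (f t)) (mem_univ s)

theorem mul_sum_compl_sq_le_sum_mul_sq {ι : Type*} [Fintype ι] [DecidableEq ι] {T : Finset ι}
    {lam c : ι → ℝ} {μ : ℝ} (hlam : ∀ i, 0 ≤ lam i) (hμ : ∀ i ∉ T, μ ≤ lam i) :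
    μ * ∑ i ∈ Tᶜ, c i ^ 2 ≤ ∑ i, lam i * c i ^ 2 :=
  calc μ * ∑ i ∈ Tᶜ, c i ^ 2 = ∑ i ∈ Tᶜ, μ * c i ^ 2 := mul_sum _ _ _
    _ ≤ ∑ i ∈ Tᶜ, lam i * c i ^ 2 := sum_le_sum fun i hi =>
        mul_le_mul_of_nonneg_right (hμ i (mem_compl.1 hi)) (sq_nonneg _)
    _ ≤ ∑ i, lam i * c i ^ 2 := sum_le_sum_of_subset_of_nonneg (subset_univ _)
        fun i _ _ => mul_nonneg (hlam i) (sq_nonneg _)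

section Orthonormal

variable {ι S : Type*} [Fintype S] [DecidableEq ι] {e : ι → S → ℝ}

theorem sum_smul_dotProduct_sum_smul_of_orthonormal
    (he : ∀ i j, e i ⬝ᵥ e j = if i = j then 1 else 0) (T : Finset ι) (c : ι → ℝ) :
    (∑ i ∈ T, c i • e i) ⬝ᵥ (∑ i ∈ T, c i • e i) = ∑ i ∈ T, c i ^ 2 := by
  simp [sum_dotProduct, dotProduct_sum, he, sq]

variable [Fintype ι] [DecidableEq S]

theorem sum_mul_eq_ite_of_orthonormal
    (hcard : Fintype.card ι = Fintype.card S)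
    (he : ∀ i j, e i ⬝ᵥ e j = if i = j then 1 else 0) (s t : S) :
    ∑ i, e i s * e i t = if s = t then 1 else 0 := by
  have h : (Matrix.of e)ᵀ * Matrix.of e = 1 := by
    rw [← mul_eq_one_comm_of_card_eq (R := ℝ) (eq := hcard)]
    ext i j
    exact (mul_apply' ..).trans ((he i j).trans (one_apply ..).symm)
  simpa [mul_apply, one_apply] using congrFun (congrFun h s) t

theorem sum_dotProduct_smul_of_orthonormal
    (hcard : Fintype.card ι = Fintype.card S)
    (he : ∀ i j, e i ⬝ᵥ e j = if i = j then 1 else 0) (f : S → ℝ) :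
    ∑ i, (f ⬝ᵥ e i) • e i = f := by
  ext s
  simp only [Finset.sum_apply, Pi.smul_apply, smul_eq_mul, dotProduct, sum_mul]
  rw [sum_comm]
  simp [mul_assoc, ← mul_sum, sum_mul_eq_ite_of_orthonormal hcard he]

theorem dotProduct_mulVec_eq_sum_eigenvalue_mul_sq
    (hcard : Fintype.card ι = Fintype.card S)
    (he : ∀ i j, e i ⬝ᵥ e j = if i = j then 1 else 0)
    {M : Matrix S S ℝ} {lam : ι → ℝ} (heig : ∀ i, M *ᵥ e i = lam i • e i) (f : S → ℝ) :
    f ⬝ᵥ (M *ᵥ f) = ∑ i, lam i * (f ⬝ᵥ e i) ^ 2 := by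
  have hMf : M *ᵥ f = ∑ i, (f ⬝ᵥ e i) • lam i • e i := by
    conv_lhs => rw [← sum_dotProduct_smul_of_orthonormal hcard he f]
    simp only [mulVec_sum, mulVec_smul, heig]
  simp only [hMf, dotProduct_sum, dotProduct_smul, smul_eq_mul]
  exact sum_congr rfl fun i _ => by ring

theorem norm_sub_sum_dotProduct_smul_le_of_orthonormal
    (hcard : Fintype.card ι = Fintype.card S)
    (he : ∀ i j, e i ⬝ᵥ e j = if i = j then 1 else 0)
    {M : Matrix S S ℝ} {lam : ι → ℝ} (heig : ∀ i, M *ᵥ e i = lam i • e i)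
    (hlam : ∀ i, 0 ≤ lam i) (T : Finset ι) {μ : ℝ} (hμ0 : 0 < μ) (hμ : ∀ i ∉ T, μ ≤ lam i)
    (f : S → ℝ) :
    ‖f - ∑ i ∈ T, (f ⬝ᵥ e i) • e i‖ ≤ √(f ⬝ᵥ (M *ᵥ f)) / √μ := by
  set d := f - ∑ i ∈ T, (f ⬝ᵥ e i) • e i with hd_def
  have hd : d = ∑ i ∈ Tᶜ, (f ⬝ᵥ e i) • e i := by
    rw [hd_def, sub_eq_iff_eq_add', sum_add_sum_compl, sum_dotProduct_smul_of_orthonormal hcard he]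
  have htail : μ * (d ⬝ᵥ d) ≤ f ⬝ᵥ (M *ᵥ f) := by
    rw [hd, sum_smul_dotProduct_sum_smul_of_orthonormal he,
      dotProduct_mulVec_eq_sum_eigenvalue_mul_sq hcard he heig]
    exact mul_sum_compl_sq_le_sum_mul_sq hlam hμ
  calc ‖d‖ ≤ √(d ⬝ᵥ d) := norm_le_sqrt_dotProduct_self d
    _ ≤ √(f ⬝ᵥ (M *ᵥ f) / μ) := Real.sqrt_le_sqrt ((le_div_iff₀' hμ0).2 htail)
    _ = √(f ⬝ᵥ (M *ᵥ f)) / √μ := Real.sqrt_div' _ hμ0.le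

end Orthonormal

theorem half_sum_mul_sub_sq_eq_dotProduct_one_sub_mulVec {S : Type*} [Fintype S] [DecidableEq S]
    {P : S → S → ℝ} (hP_symm : ∀ i j, P i j = P j i) (hP_row : ∀ i, ∑ j, P i j = 1)
    (f : S → ℝ) :
    1 / 2 * ∑ i, ∑ j, P i j * (f i - f j) ^ 2 = f ⬝ᵥ ((1 - Matrix.of P) *ᵥ f) := by
  have hP_col : ∀ j, ∑ i, P i j = 1 := fun j => by
    rw [← hP_row j]; exact sum_congr rfl fun i _ => hP_symm i j
  have hrow : ∑ i, ∑ j, P i j * f i ^ 2 = f ⬝ᵥ f := by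
    simp [← sum_mul, hP_row, dotProduct, sq]
  have hcol : ∑ i, ∑ j, P i j * f j ^ 2 = f ⬝ᵥ f := by
    rw [sum_comm]; simp [← sum_mul, hP_col, dotProduct, sq]
  have hcross : f ⬝ᵥ (Matrix.of P *ᵥ f) = ∑ i, ∑ j, P i j * (f i * f j) := by
    simp only [dotProduct, mulVec, of_apply, mul_sum]
    exact sum_congr rfl fun i _ => sum_congr rfl fun j _ => by ring
  have hexpand : ∑ i, ∑ j, P i j * (f i - f j) ^ 2 = ∑ i, ∑ j, P i j * f i ^ 2
      - 2 * ∑ i, ∑ j, P i j * (f i * f j) + ∑ i, ∑ j, P i j * f j ^ 2 := by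
    simp only [mul_sum, ← sum_sub_distrib, ← sum_add_distrib]
    exact sum_congr rfl fun i _ => sum_congr rfl fun j _ => by ring
  rw [hexpand, hrow, hcol, ← hcross, sub_mulVec, one_mulVec, dotProduct_sub]
  ring

section Bellman

variable {S A : Type*} [Fintype S] [Fintype A] [Nonempty A]

theorem sup'_sum_mul_sub_sup'_sum_mul_le {w : A → S → ℝ} (hw0 : ∀ a s, 0 ≤ w a s)
    (hw1 : ∀ a, ∑ s, w a s = 1) {f g : S → ℝ} {C : ℝ} (hfg : ∀ s, f s - g s ≤ C) :
    univ.sup' univ_nonempty (fun a => ∑ s, w a s * f s)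
      - univ.sup' univ_nonempty (fun a => ∑ s, w a s * g s) ≤ C := by
  rw [sub_le_iff_le_add']
  refine sup'_le _ _ fun a _ => ?_
  calc ∑ s, w a s * f s ≤ ∑ s, w a s * (g s + C) :=
        sum_le_sum fun s _ => mul_le_mul_of_nonneg_left (by linarith [hfg s]) (hw0 a s)
    _ = ∑ s, w a s * g s + C := by simp [mul_add, sum_add_distrib, ← sum_mul, hw1]
    _ ≤ _ := add_le_add_left (le_sup' (fun a => ∑ s, w a s * g s) (mem_univ a)) C

theorem abs_sup'_sum_mul_sub_sup'_sum_mul_le {w : A → S → ℝ} (hw0 : ∀ a s, 0 ≤ w a s)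
    (hw1 : ∀ a, ∑ s, w a s = 1) (f g : S → ℝ) :
    |univ.sup' univ_nonempty (fun a => ∑ s, w a s * f s)
      - univ.sup' univ_nonempty (fun a => ∑ s, w a s * g s)| ≤ ‖f - g‖ := by
  have hfg : ∀ s, |f s - g s| ≤ ‖f - g‖ := norm_le_pi_norm (f - g)
  rw [abs_sub_le_iff]
  exact ⟨sup'_sum_mul_sub_sup'_sum_mul_le hw0 hw1 fun s => (abs_le.1 (hfg s)).2,
    sup'_sum_mul_sub_sup'_sum_mul_le hw0 hw1 fun s => by linarith [(abs_le.1 (hfg s)).1]⟩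

theorem one_sub_mul_norm_sub_le_of_bellman {p : S → A → S → ℝ}
    (hp_nonneg : ∀ s a s', 0 ≤ p s a s') (hp_sum : ∀ s a, ∑ s', p s a s' = 1)
    {γ : ℝ} (hγ : 0 ≤ γ) {r₁ r₂ v₁ v₂ : S → ℝ}
    (hv₁ : ∀ s, v₁ s = univ.sup' univ_nonempty fun a => ∑ s', p s a s' * (r₁ s' + γ * v₁ s'))
    (hv₂ : ∀ s, v₂ s = univ.sup' univ_nonempty fun a => ∑ s', p s a s' * (r₂ s' + γ * v₂ s')) :
    (1 - γ) * ‖v₁ - v₂‖ ≤ ‖r₁ - r₂‖ := by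
  have hstep : ‖v₁ - v₂‖ ≤ ‖(r₁ - r₂) + γ • (v₁ - v₂)‖ := by
    refine (pi_norm_le_iff_of_nonneg (norm_nonneg _)).2 fun s => ?_
    rw [Pi.sub_apply, hv₁ s, hv₂ s, Real.norm_eq_abs]
    refine (abs_sup'_sum_mul_sub_sup'_sum_mul_le (hp_nonneg s) (hp_sum s) _ _).trans_eq ?_
    congr 1; ext s'; simp only [Pi.sub_apply, Pi.add_apply, Pi.smul_apply, smul_eq_mul]; ring
  have hsplit : ‖(r₁ - r₂) + γ • (v₁ - v₂)‖ ≤ ‖r₁ - r₂‖ + γ * ‖v₁ - v₂‖ :=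
    (norm_add_le _ _).trans_eq (by rw [norm_smul, Real.norm_of_nonneg hγ])
  linarith

end Bellman


/-- Value approximation error bound: if `v` is an optimal value function for reward `r`
and `vk` an optimal value function for the truncated spectral reconstruction `rk` of `r`
(using the first `k` eigenvectors of the graph Laplacian `L = I - P`), then
`‖v - vk‖_∞ ≤ ‖r‖_G / ((1 - γ) * √(λ_k))`. -/
theorem laplacian_value_approx_bound
    {S A : Type*} [Fintype S] [Nonempty S] [DecidableEq S] [Fintype A] [Nonempty A]
    (p : S → A → S → ℝ)
    (hp_nonneg : ∀ s a s', 0 ≤ p s a s')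
    (hp_sum : ∀ s a, ∑ s', p s a s' = 1)
    (γ : ℝ) (hγ0 : 0 ≤ γ) (hγ1 : γ < 1)
    (P : S → S → ℝ)
    (hP_symm : ∀ i j, P i j = P j i)
    (hP_row : ∀ i, ∑ j, P i j = 1)
    -- orthonormal eigenbasis of the graph Laplacian `L = I - P`
    (e : Fin (Fintype.card S) → S → ℝ)
    (lam : Fin (Fintype.card S) → ℝ)
    (h_eigen : ∀ i s, ∑ t, ((if s = t then (1 : ℝ) else 0) - P s t) * e i t = lam i * e i s)
    (h_ortho : ∀ i j, ∑ s, e i s * e j s = if i = j then (1 : ℝ) else 0)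
    (h_mono : Monotone lam)
    (h_lam0 : lam ⟨0, Fintype.card_pos⟩ = 0)
    (r : S → ℝ)
    (k : ℕ) (hk1 : 1 ≤ k) (hk : k ≤ Fintype.card S)
    (hlamk : 0 < lam ⟨k - 1, by omega⟩)
    -- truncated spectral reconstruction of `r` using the first `k` eigenvectors
    (rk : S → ℝ)
    (hrk : ∀ s, rk s = ∑ i ∈ Finset.univ.filter (fun i : Fin (Fintype.card S) => (i : ℕ) < k),
        (∑ t, r t * e i t) * e i s)
    -- Bellman optimality equations
    (v vk : S → ℝ)
    (hv : ∀ s, v s = Finset.univ.sup' Finset.univ_nonempty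
      (fun a => ∑ s', p s a s' * (r s' + γ * v s')))
    (hvk : ∀ s, vk s = Finset.univ.sup' Finset.univ_nonempty
      (fun a => ∑ s', p s a s' * (rk s' + γ * vk s'))) :
    ‖v - vk‖ ≤ Real.sqrt ((1 / 2) * ∑ i, ∑ j, P i j * (r i - r j) ^ 2) /
      ((1 - γ) * Real.sqrt (lam ⟨k - 1, by omega⟩)) := by
  have heig : ∀ i, (1 - Matrix.of P) *ᵥ e i = lam i • e i := fun i => funext (h_eigen i)
  have hlam : ∀ i, 0 ≤ lam i := fun i => h_lam0 ▸ h_mono (Fin.zero_le i)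
  have hlamk_le : ∀ i ∉ univ.filter (fun i : Fin (Fintype.card S) => (i : ℕ) < k),
      lam ⟨k - 1, by omega⟩ ≤ lam i := fun i hi => h_mono <| by
    simp only [mem_filter, mem_univ, true_and, not_lt] at hi
    exact Fin.mk_le_of_le_val (by omega)
  have hrk' : rk = ∑ i ∈ univ.filter (fun i : Fin (Fintype.card S) => (i : ℕ) < k),
      (r ⬝ᵥ e i) • e i := funext fun s => by simp [hrk, Finset.sum_apply, dotProduct]
  have hreward := norm_sub_sum_dotProduct_smul_le_of_orthonormal (Fintype.card_fin _) h_ortho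
    heig hlam _ hlamk hlamk_le r
  rw [← hrk', ← half_sum_mul_sub_sq_eq_dotProduct_one_sub_mulVec hP_symm hP_row] at hreward
  rw [div_mul_eq_div_div_swap, le_div_iff₀' (sub_pos.2 hγ1)]
  exact (one_sub_mul_norm_sub_le_of_bellman hp_nonneg hp_sum hγ0 hv hvk).trans hreward
end

section
/- Let S be a finite nonempty state space, A a finite nonempty action space, p transition probabilities on S×A with p(s'|s,a) ≥ 0 and Σ_{s'} p(s'|s,a) = 1 for all s,a, γ ∈ [0,1), π : S → A a deterministic policy, and φ : S → ℝ^d a feature map. Suppose ψ : S×A → ℝ^d satisfies the successor-feature Bellman equation ψ(s,a) = Σ_{s'} p(s'|s,a)·(φ(s') + γ·ψ(s', π(s'))) for all (s,a), and for a weight vector w ∈ ℝ^d suppose q : S×A → ℝ satisfies the policy-evaluation Bellman equation q(s,a) = Σ_{s'} p(s'|s,a)·(r_w(s') + γ·q(s', π(s'))) for all (s,a), where r_w(s') = ⟨w, φ(s')⟩. Then q(s,a) = ⟨w, ψ(s,a)⟩ for all (s,a) ∈ S×A. -/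
/-!
Taking the inner product with `w` commutes with the finite sums in the successor-feature
equation, so `⟨w, ψ⟩` solves the same policy-evaluation equation as `q`. That equation has a
unique solution: its restriction to on-policy pairs `s ↦ q(s, π s)` is a fixed point of the
state-value Bellman operator, a `γ`-contraction in the sup norm, and `q` is determined by it.
-/

open Finset Function

section PolicyEvaluation

variable {S A : Type*} [Fintype S]

def stateBellman (P : S → S → ℝ) (r : S → ℝ) (γ : ℝ) (v : S → ℝ) (s : S) : ℝ :=
  ∑ s', P s s' * (r s' + γ * v s')

def IsActionValue (p : S → A → S → ℝ) (r : S → ℝ) (γ : ℝ) (pol : S → A) (q : S → A → ℝ) :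
    Prop :=
  ∀ s a, q s a = ∑ s', p s a s' * (r s' + γ * q s' (pol s'))

theorem dist_stateBellman_le {P : S → S → ℝ} (hP_nonneg : ∀ s s', 0 ≤ P s s')
    (hP_sum : ∀ s, ∑ s', P s s' = 1) (r : S → ℝ) {γ : ℝ} (hγ : 0 ≤ γ) (v v' : S → ℝ) :
    dist (stateBellman P r γ v) (stateBellman P r γ v') ≤ γ * dist v v' := by
  refine (dist_pi_le_iff (by positivity)).2 fun s => ?_
  calc dist (stateBellman P r γ v s) (stateBellman P r γ v' s)
      = |∑ s', P s s' * γ * (v s' - v' s')| := by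
        rw [Real.dist_eq, stateBellman, stateBellman, ← sum_sub_distrib]
        congr 1
        exact sum_congr rfl fun _ _ => by ring
    _ ≤ ∑ s', P s s' * γ * |v s' - v' s'| := by
        refine (abs_sum_le_sum_abs _ _).trans_eq (sum_congr rfl fun s' _ => ?_)
        rw [abs_mul, abs_of_nonneg (mul_nonneg (hP_nonneg s s') hγ)]
    _ ≤ ∑ s', P s s' * γ * dist v v' := by
        gcongr with s'
        · exact mul_nonneg (hP_nonneg s s') hγ
        · exact dist_le_pi_dist v v' s'
    _ = γ * dist v v' := by rw [← sum_mul, ← sum_mul, hP_sum, one_mul]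

theorem contractingWith_stateBellman {P : S → S → ℝ} (hP_nonneg : ∀ s s', 0 ≤ P s s')
    (hP_sum : ∀ s, ∑ s', P s s' = 1) (r : S → ℝ) {γ : ℝ} (hγ0 : 0 ≤ γ) (hγ1 : γ < 1) :
    ContractingWith ⟨γ, hγ0⟩ (stateBellman P r γ) :=
  ⟨hγ1, LipschitzWith.of_dist_le_mul (dist_stateBellman_le hP_nonneg hP_sum r hγ0)⟩

theorem IsActionValue.isFixedPt_stateBellman {p : S → A → S → ℝ} {r : S → ℝ} {γ : ℝ}
    {pol : S → A} {q : S → A → ℝ} (hq : IsActionValue p r γ pol q) :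
    IsFixedPt (stateBellman (fun s => p s (pol s)) r γ) (fun s => q s (pol s)) :=
  funext fun s => (hq s (pol s)).symm

theorem IsActionValue.unique {p : S → A → S → ℝ} (hp_nonneg : ∀ s a s', 0 ≤ p s a s')
    (hp_sum : ∀ s a, ∑ s', p s a s' = 1) {r : S → ℝ} {γ : ℝ} (hγ0 : 0 ≤ γ) (hγ1 : γ < 1)
    {pol : S → A} {q q' : S → A → ℝ} (hq : IsActionValue p r γ pol q)
    (hq' : IsActionValue p r γ pol q') : q = q' := by
  have h_onPolicy : (fun s => q s (pol s)) = fun s => q' s (pol s) :=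
    (contractingWith_stateBellman (fun s => hp_nonneg s (pol s)) (fun s => hp_sum s (pol s))
      r hγ0 hγ1).fixedPoint_unique' hq.isFixedPt_stateBellman hq'.isFixedPt_stateBellman
  funext s a
  rw [hq s a, hq' s a]
  simp only [congrFun h_onPolicy]

end PolicyEvaluation

theorem isActionValue_inner_successorFeatures {S A ι : Type*} [Fintype S] [Fintype ι]
    {p : S → A → S → ℝ} {γ : ℝ} {pol : S → A} {φ : S → ι → ℝ} {ψ : S → A → ι → ℝ}
    (hψ : ∀ s a j, ψ s a j = ∑ s', p s a s' * (φ s' j + γ * ψ s' (pol s') j)) (w : ι → ℝ) :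
    IsActionValue p (fun s => ∑ j, w j * φ s j) γ pol (fun s a => ∑ j, w j * ψ s a j) := by
  intro s a
  simp_rw [hψ s a, mul_sum]
  rw [sum_comm]
  refine sum_congr rfl fun s' _ => ?_
  rw [mul_add, mul_sum, mul_sum, ← sum_add_distrib]
  exact sum_congr rfl fun j _ => by ring

theorem successor_features_linear_value_general
    {S A : Type*} [Fintype S]
    (p : S → A → S → ℝ)
    (hp_nonneg : ∀ s a s', 0 ≤ p s a s')
    (hp_sum : ∀ s a, ∑ s', p s a s' = 1)
    (γ : ℝ) (hγ0 : 0 ≤ γ) (hγ1 : γ < 1)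
    {d : ℕ}
    (pol : S → A) (φ : S → Fin d → ℝ)
    (ψ : S → A → Fin d → ℝ)
    (hψ : ∀ s a j, ψ s a j = ∑ s', p s a s' * (φ s' j + γ * ψ s' (pol s') j))
    (w : Fin d → ℝ) (q : S → A → ℝ)
    (hq : ∀ s a, q s a = ∑ s', p s a s' * ((∑ j, w j * φ s' j) + γ * q s' (pol s'))) :
    ∀ s a, q s a = ∑ j, w j * ψ s a j := by
  intro s a
  have h := IsActionValue.unique hp_nonneg hp_sum hγ0 hγ1 hq
    (isActionValue_inner_successorFeatures hψ w)
  exact congrFun (congrFun h s) a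

/-- Successor features and policy evaluation: if `ψ` satisfies the successor-feature
Bellman equation for policy `pol` and feature map `φ`, and `q` satisfies the
policy-evaluation Bellman equation for the linear reward `r_w(s) = ⟨w, φ(s)⟩`, then
`q(s, a) = ⟨w, ψ(s, a)⟩` for all `(s, a)`. -/
theorem successor_features_linear_value
    {S A : Type*} [Fintype S] [Nonempty S] [Fintype A] [Nonempty A]
    (p : S → A → S → ℝ)
    (hp_nonneg : ∀ s a s', 0 ≤ p s a s')
    (hp_sum : ∀ s a, ∑ s', p s a s' = 1)
    (γ : ℝ) (hγ0 : 0 ≤ γ) (hγ1 : γ < 1)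
    {d : ℕ}
    (pol : S → A) (φ : S → Fin d → ℝ)
    (ψ : S → A → Fin d → ℝ)
    (hψ : ∀ s a j, ψ s a j = ∑ s', p s a s' * (φ s' j + γ * ψ s' (pol s') j))
    (w : Fin d → ℝ) (q : S → A → ℝ)
    (hq : ∀ s a, q s a = ∑ s', p s a s' * ((∑ j, w j * φ s' j) + γ * q s' (pol s'))) :
    ∀ s a, q s a = ∑ j, w j * ψ s a j :=
  successor_features_linear_value_general p hp_nonneg hp_sum γ hγ0 hγ1 pol φ ψ hψ w q hq
end
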